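/- arXiv:2307.15622 — 5 statements merged into one kernel-verified Lean document; each statement's English description precedes it below -/
import Mathlib

section
/- Let R be a commutative ring with 1, M a free R-module with basis B = {b_1, ..., b_l}, and U the submodule of M consisting of all elements Σ c_i b_i such that Σ_j a_{ij} c_j = 0 for all i, where (a_{ij}) is a fixed family of elements of R. Let {b_1*, ..., b_l*} be the basis of M* = Hom_R(M, R) dual to B, and let X be the submodule of M* generated by all elements Σ_j a_{ij} b_j*. Then U is isomorphic as an R-module to (M*/X)*. -/
/-!
`U` is the set of common zeros of the generators of `X`, i.e. the coannihilator of `X` in `M`.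
Since `M` is finite free it is reflexive, so evaluation carries this coannihilator onto the
annihilator of `X` in `M**`, and that annihilator is the dual of `M* ⧸ X`.
-/

open Module

namespace Submodule

variable {R M : Type*} [CommRing R] [AddCommGroup M] [Module R M]

theorem map_evalEquiv_dualCoannihilator [IsReflexive R M] (Φ : Submodule R (Dual R M)) :
    Φ.dualCoannihilator.map (evalEquiv R M : M →ₗ[R] Dual R (Dual R M)) = Φ.dualAnnihilator := by
  ext φ
  obtain ⟨x, rfl⟩ := (evalEquiv R M).surjective φ
  rw [mem_map_equiv, LinearEquiv.symm_apply_apply]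
  simp [mem_dualCoannihilator, mem_dualAnnihilator]

noncomputable def dualCoannihilatorEquivDualQuot [IsReflexive R M] (Φ : Submodule R (Dual R M)) :
    Φ.dualCoannihilator ≃ₗ[R] Dual R (Dual R M ⧸ Φ) :=
  ((evalEquiv R M).submoduleMap Φ.dualCoannihilator).trans <|
    (LinearEquiv.ofEq _ _ (map_evalEquiv_dualCoannihilator Φ)).trans
      Φ.dualQuotEquivDualAnnihilator.symm

end Submodule

/-- Lemma 2.3 of [dds] ("switch" lemma): for a free module `M` over a commutative ring `R`
with basis `b`, the submodule `U` cut out by the linear equations `∑ j, a i j * c j = 0`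
on coordinates is isomorphic to the dual of `M^* / X`, where `X` is the submodule of the
dual generated by the functionals `∑ j, a i j • b.coord j`. -/
theorem stmt_0 {R : Type*} [CommRing R] {M : Type*} [AddCommGroup M] [Module R M]
    {l : ℕ} (b : Module.Basis (Fin l) R M) {ι : Type*} (a : ι → Fin l → R)
    (U : Submodule R M)
    (hU : ∀ x : M, x ∈ U ↔ ∀ i : ι, ∑ j : Fin l, a i j * b.repr x j = 0)
    (X : Submodule R (Module.Dual R M))
    (hX : X = Submodule.span R (Set.range fun i : ι => ∑ j : Fin l, a i j • b.coord j)) :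
    Nonempty (U ≃ₗ[R] Module.Dual R (Module.Dual R M ⧸ X)) := by
  have : Module.Free R M := .of_basis b
  have : Module.Finite R M := .of_basis b
  have hUX : U = X.dualCoannihilator := by
    ext x
    rw [hU, hX, ← SetLike.mem_coe, Submodule.coe_dualCoannihilator_span]
    simp
  subst hUX
  exact ⟨X.dualCoannihilatorEquivDualQuot⟩
end

section
/- For any vectors f_1, ..., f_r in a vector space U over a commutative ring, the polarization identity holds: Σ_{σ ∈ Σ_r} f_{σ(1)} ⊗ f_{σ(2)} ⊗ ... ⊗ f_{σ(r)} = Σ_{I ⊆ {1,...,r}} (-1)^{r-|I|} (Σ_{i ∈ I} f_i)^{⊗r}. -/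
/-!
Expanding each `(∑ i ∈ I, f i)^{⊗r}` multilinearly turns the right-hand side into a sum over all
maps `p : Fin r → Fin r`, the term `f (p 1) ⊗ ⋯ ⊗ f (p r)` receiving the coefficient
`∑_{I ⊇ im p} (-1)^{|Iᶜ|}`. By inclusion–exclusion this coefficient is `1` if `p` is surjective,
i.e. a permutation, and `0` otherwise.
-/

open Finset

theorem Finset.image_univ_eq_univ_iff {α β : Type*} [Fintype α] [Fintype β] [DecidableEq β]
    {p : α → β} : univ.image p = univ ↔ Function.Surjective p := by
  simp [eq_univ_iff_forall, Function.Surjective]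

section Polarization

variable {ι : Type*} [Fintype ι] [DecidableEq ι]

theorem Finset.sum_superset_neg_one_pow_card_compl (S : Finset ι) :
    ∑ I with S ⊆ I, (-1 : ℤ) ^ #Iᶜ = if S = univ then 1 else 0 := by
  have : ∑ I with S ⊆ I, (-1 : ℤ) ^ #Iᶜ = ∑ J ∈ Sᶜ.powerset, (-1 : ℤ) ^ #J :=
    sum_nbij' compl compl (by simp) (by simp [subset_compl_comm]) (by simp) (by simp) (by simp)
  simp [this, sum_powerset_neg_one_pow_card]

theorem Finset.sum_perm_eq_sum_surjective {N : Type*} [AddCommMonoid N] (F : (ι → ι) → N) :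
    ∑ σ : Equiv.Perm ι, F σ = ∑ p with Function.Surjective p, F p := by
  have : univ.map ⟨((⇑) : Equiv.Perm ι → ι → ι), DFunLike.coe_injective⟩ =
      ({p | Function.Surjective p} : Finset (ι → ι)) := by
    ext p
    simp only [mem_map, mem_univ, true_and, mem_filter, Function.Embedding.coeFn_mk]
    exact ⟨fun ⟨σ, hσ⟩ => hσ ▸ σ.surjective,
      fun hp => ⟨Equiv.ofBijective p (Finite.surjective_iff_bijective.mp hp), rfl⟩⟩
  rw [← this, sum_map]
  rfl

namespace MultilinearMap

variable {R M N : Type*} [CommSemiring R] [AddCommMonoid M] [Module R M] [AddCommGroup N]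
  [Module R N]

theorem sum_perm_eq_sum_neg_one_pow_card_compl (g : MultilinearMap R (fun _ : ι => M) N)
    (f : ι → M) :
    ∑ σ : Equiv.Perm ι, g (f ∘ σ) = ∑ I : Finset ι, (-1 : ℤ) ^ #Iᶜ • g (fun _ => ∑ i ∈ I, f i) :=
  calc ∑ σ : Equiv.Perm ι, g (f ∘ σ)
      = ∑ p : ι → ι, (if Function.Surjective p then 1 else 0 : ℤ) • g (f ∘ p) := by
        rw [sum_perm_eq_sum_surjective (fun p => g (f ∘ p)), sum_filter]
        simp [ite_smul]
    _ = ∑ p : ι → ι, (∑ I with univ.image p ⊆ I, (-1 : ℤ) ^ #Iᶜ) • g (f ∘ p) := by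
        simp_rw [sum_superset_neg_one_pow_card_compl, image_univ_eq_univ_iff]
    _ = ∑ I : Finset ι, ∑ p ∈ Fintype.piFinset (fun _ => I), (-1 : ℤ) ^ #Iᶜ • g (f ∘ p) := by
        simp_rw [sum_smul, sum_filter, image_subset_iff]
        rw [sum_comm]
        refine sum_congr rfl fun I _ => ?_
        rw [← sum_filter]
        congr 1
        ext p
        simp
    _ = ∑ I : Finset ι, (-1 : ℤ) ^ #Iᶜ • g (fun _ => ∑ i ∈ I, f i) := by
        simp_rw [g.map_sum_finset (fun _ => f), smul_sum]
        rfl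

end MultilinearMap

end Polarization

/-- The polarization identity: for vectors `f 1, …, f r` of a module `M` over a
commutative ring `R`,
`∑_{σ ∈ Σ_r} f_{σ(1)} ⊗ ⋯ ⊗ f_{σ(r)} = ∑_{I ⊆ {1,…,r}} (-1)^{r-|I|} (∑_{i∈I} f i)^{⊗r}`. -/
theorem stmt_2 (R : Type*) [CommRing R] (M : Type*) [AddCommGroup M] [Module R M]
    (r : ℕ) (f : Fin r → M) :
    ∑ σ : Equiv.Perm (Fin r), PiTensorProduct.tprod R (fun i : Fin r => f (σ i))
      = ∑ I : Finset (Fin r),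
          ((-1 : ℤ) ^ (r - I.card)) •
            PiTensorProduct.tprod R (fun _ : Fin r => ∑ i ∈ I, f i) := by
  have card_compl_fin (I : Finset (Fin r)) : r - #I = #Iᶜ := by simp [card_compl]
  simp_rw [card_compl_fin]
  exact (PiTensorProduct.tprod R).sum_perm_eq_sum_neg_one_pow_card_compl f
end

section
/- Let K be an infinite field and V a finite-dimensional K-vector space. There is a natural isomorphism of K-algebras End_{KΣ_r}(V^{⊗r}) ≅ Sym^r(End_K(V)), where Sym^r denotes the Σ_r-invariants of the r-fold tensor power. -/
/-!
The natural map `⨂ᵢ End V → End (⨂ᵢ V)`, `⨂ fᵢ ↦ (⨂ vᵢ ↦ ⨂ fᵢ vᵢ)`, is an algebra homomorphism,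
and for `V` finite free it sends the tensor basis built from the matrix units of `End V` to the
matrix units of the tensor basis of `⨂ V`, so it is an isomorphism. It turns the permutation of
the tensor factors of `⨂ End V` into conjugation by the permutation operators on `⨂ V`; hence it
maps the `Σ_r`-invariants onto the centralizer of those operators.
-/

open scoped TensorProduct
open PiTensorProduct Module

namespace PiTensorProduct

variable {ι R : Type*} [CommSemiring R] {M N : ι → Type*}
  [∀ i, AddCommMonoid (M i)] [∀ i, Module R (M i)] [∀ i, AddCommMonoid (N i)] [∀ i, Module R (N i)]

theorem piTensorHomMap_basis_linearMap [Fintype ι] [DecidableEq ι] {κ κ' : ι → Type*}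
    [∀ i, Fintype (κ i)] [∀ i, DecidableEq (κ i)] [∀ i, Fintype (κ' i)]
    (b : ∀ i, Basis (κ i) R (M i)) (c : ∀ i, Basis (κ' i) R (N i)) (p : ∀ i, κ' i × κ i) :
    piTensorHomMap (Basis.piTensorProduct (fun i => (b i).linearMap (c i)) p) =
      (Basis.piTensorProduct b).linearMap (Basis.piTensorProduct c)
        (Equiv.arrowProdEquivProdArrow ι κ' κ p) := by
  refine (Basis.piTensorProduct b).ext fun q => ?_
  rw [Basis.linearMap_apply_apply]
  simp only [Basis.piTensorProduct_apply, piTensorHomMap_tprod_tprod, Basis.linearMap_apply_apply,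
    Equiv.arrowProdEquivProdArrow_apply]
  split_ifs with h
  · subst h; simp
  · obtain ⟨i, hi⟩ := Function.ne_iff.mp h
    exact MultilinearMap.map_coord_zero _ i (if_neg hi)

theorem piTensorHomMap_bijective [Finite ι] [∀ i, Free R (M i)] [∀ i, Module.Finite R (M i)]
    [∀ i, Free R (N i)] [∀ i, Module.Finite R (N i)] :
    Function.Bijective (piTensorHomMap (R := R) (s := M) (t := N)) := by
  classical
  have := Fintype.ofFinite ι
  let b := fun i => Free.chooseBasis R (M i)
  let c := fun i => Free.chooseBasis R (N i)
  have h : piTensorHomMap = ((Basis.piTensorProduct fun i => (b i).linearMap (c i)).equiv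
      ((Basis.piTensorProduct b).linearMap (Basis.piTensorProduct c))
      (Equiv.arrowProdEquivProdArrow ι _ _)).toLinearMap :=
    Basis.ext _ fun p => by
      rw [LinearEquiv.coe_coe, Basis.equiv_apply, piTensorHomMap_basis_linearMap]
  rw [h]
  exact LinearEquiv.bijective _

theorem piTensorHomMap_reindex {ι' : Type*} (e : ι ≃ ι') (x : ⨂[R] i, (M i →ₗ[R] N i)) :
    piTensorHomMap (reindex R (fun i => M i →ₗ[R] N i) e x) ∘ₗ (reindex R M e).toLinearMap =
      (reindex R N e).toLinearMap ∘ₗ piTensorHomMap x := by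
  induction x using PiTensorProduct.induction_on with
  | smul_tprod a f =>
    ext v
    simp
  | add x y hx hy =>
    simp only [map_add, LinearMap.add_comp, LinearMap.comp_add, hx, hy]

variable (R M) in
noncomputable def endAlgHom : (⨂[R] i, Module.End R (M i)) →ₐ[R] Module.End R (⨂[R] i, M i) :=
  liftAlgHom (mapMultilinear R M M) PiTensorProduct.map_one fun f g => PiTensorProduct.map_mul f g

theorem endAlgHom_toLinearMap : (endAlgHom R M).toLinearMap = piTensorHomMap := by
  ext f v
  simp [endAlgHom, liftAlgHom]

variable (R M) in
noncomputable def endAlgEquiv [Finite ι] [∀ i, Free R (M i)] [∀ i, Module.Finite R (M i)] :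
    (⨂[R] i, Module.End R (M i)) ≃ₐ[R] Module.End R (⨂[R] i, M i) :=
  AlgEquiv.ofBijective (endAlgHom R M) <| by
    rw [← AlgHom.coe_toLinearMap, endAlgHom_toLinearMap]
    exact piTensorHomMap_bijective

@[simp]
theorem endAlgEquiv_apply [Finite ι] [∀ i, Free R (M i)] [∀ i, Module.Finite R (M i)]
    (x : ⨂[R] i, Module.End R (M i)) : endAlgEquiv R M x = piTensorHomMap x :=
  LinearMap.congr_fun endAlgHom_toLinearMap x

section Invariants

variable {ι R M : Type*} [CommSemiring R] [AddCommMonoid M] [Module R M]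
  [Finite ι] [Free R M] [Module.Finite R M]

theorem reindex_eq_self_iff_commute (σ : Equiv.Perm ι) (x : ⨂[R] _ : ι, Module.End R M) :
    reindex R (fun _ => Module.End R M) σ x = x ↔
      Commute ((reindex R (fun _ : ι => M) σ).toLinearMap : Module.End R (⨂[R] _ : ι, M))
        (endAlgEquiv R (fun _ => M) x) := by
  have intertwine := piTensorHomMap_reindex σ x
  simp only [commute_iff_eq, endAlgEquiv_apply, Module.End.mul_eq_comp]
  refine ⟨fun hx => by rw [hx] at intertwine; exact intertwine.symm, fun hcomm => ?_⟩
  rw [hcomm, LinearEquiv.eq_comp_toLinearMap_iff, ← endAlgEquiv_apply, ← endAlgEquiv_apply]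
    at intertwine
  exact (endAlgEquiv R (fun _ => M)).injective intertwine

theorem map_centralizer_range_reindex :
    (Subalgebra.toSubmodule (Subalgebra.centralizer R
        (Set.range fun σ : Equiv.Perm ι =>
          ((reindex R (fun _ : ι => M) σ).toLinearMap : Module.End R (⨂[R] _ : ι, M))))).map
        (endAlgEquiv R fun _ : ι => M).symm.toLinearEquiv.toLinearMap =
      ⨅ σ : Equiv.Perm ι,
        LinearMap.eqLocus (reindex R (fun _ => Module.End R M) σ).toLinearMap LinearMap.id := by
  rw [Submodule.map_equiv_eq_comap_symm]
  ext x
  simp [Submodule.mem_iInf, LinearMap.mem_eqLocus, Subalgebra.mem_centralizer_iff,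
    reindex_eq_self_iff_commute, commute_iff_eq]

end Invariants

end PiTensorProduct

theorem stmt_3_general (K : Type*) [Field K]
    (V : Type*) [AddCommGroup V] [Module K V] [FiniteDimensional K V] (r : ℕ) :
    ∃ e : ↥(Subalgebra.centralizer K
            (Set.range fun σ : Equiv.Perm (Fin r) =>
              ((PiTensorProduct.reindex K (fun _ : Fin r => V) σ).toLinearMap :
                Module.End K (PiTensorProduct K (fun _ : Fin r => V))))) ≃ₗ[K]
          ↥(⨅ σ : Equiv.Perm (Fin r),
            LinearMap.eqLocus
              ((PiTensorProduct.reindex K (fun _ : Fin r => Module.End K V) σ).toLinearMap)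
              (LinearMap.id)),
      ((e 1 : PiTensorProduct K (fun _ : Fin r => Module.End K V)) = 1) ∧
      ∀ x y, ((e (x * y) : PiTensorProduct K (fun _ : Fin r => Module.End K V))
          = (e x : PiTensorProduct K (fun _ : Fin r => Module.End K V)) *
            (e y : PiTensorProduct K (fun _ : Fin r => Module.End K V))) := by
  let Φ := endAlgEquiv K fun _ : Fin r => V
  refine ⟨(Subalgebra.toSubmoduleEquiv _).symm ≪≫ₗ
    Φ.symm.toLinearEquiv.ofSubmodules _ _ map_centralizer_range_reindex, ?_, fun x y => ?_⟩
  · exact (map_one Φ.symm : Φ.symm 1 = 1)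
  · exact map_mul Φ.symm (x : Module.End K (⨂[K] _ : Fin r, V)) y

/-- For a finite-dimensional vector space `V` over an infinite field `K`, the algebra
`End_{KΣ_r}(V^{⊗r})` of endomorphisms of `V^{⊗r}` commuting with the place-permutation
action of `Σ_r` is isomorphic, as a `K`-algebra, to `Sym^r(End_K V)`, the `Σ_r`-invariants
of the `r`-th tensor power of the algebra `End_K V`. -/
theorem stmt_3 (K : Type*) [Field K] [Infinite K]
    (V : Type*) [AddCommGroup V] [Module K V] [FiniteDimensional K V] (r : ℕ) :
    ∃ e : ↥(Subalgebra.centralizer K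
            (Set.range fun σ : Equiv.Perm (Fin r) =>
              ((PiTensorProduct.reindex K (fun _ : Fin r => V) σ).toLinearMap :
                Module.End K (PiTensorProduct K (fun _ : Fin r => V))))) ≃ₗ[K]
          ↥(⨅ σ : Equiv.Perm (Fin r),
            LinearMap.eqLocus
              ((PiTensorProduct.reindex K (fun _ : Fin r => Module.End K V) σ).toLinearMap)
              (LinearMap.id)),
      ((e 1 : PiTensorProduct K (fun _ : Fin r => Module.End K V)) = 1) ∧
      ∀ x y, ((e (x * y) : PiTensorProduct K (fun _ : Fin r => Module.End K V))
          = (e x : PiTensorProduct K (fun _ : Fin r => Module.End K V)) *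
            (e y : PiTensorProduct K (fun _ : Fin r => Module.End K V))) :=
  stmt_3_general K V r
end

section
/- Let K be an infinite field, V = K^m, r = s = 1, and let φ ∈ End_K(V ⊗ V*) be written as φ = Σ a_{(i_1 i_2),(l_1 l_2)} E_{(i_1 i_2),(l_1 l_2)} in the matrix-unit basis. Then φ commutes with the walled-Brauer contraction operator τ_r (given by (v_{l_1} ⊗ v_{l_2}*)τ_r = δ_{l_1 l_2} Σ_t v_t ⊗ v_t*) if and only if: (a) Σ_i a_{(ii),(l_1 l_2)} = 0 whenever l_1 ≠ l_2; (b) Σ_t a_{(i_1 i_2),(tt)} = 0 whenever i_1 ≠ i_2; and (c) Σ_i a_{(ii),(ll)} = Σ_t a_{(i_1 i_1),(tt)} for all l and i_1. -/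
/-- The walled-Brauer contraction operator `τ_r` for `r = s = 1`, in coordinates with
respect to the basis `v_{i} ⊗ v_{j}*` of `V ⊗ V*` (`V = K^m`):
`(v_{l₁} ⊗ v_{l₂}*)·τ_r = δ_{l₁l₂} ∑_t v_t ⊗ v_t*`. -/
noncomputable def contractionOp (K : Type*) [Field K] (m : ℕ) :
    ((Fin m × Fin m) → K) →ₗ[K] ((Fin m × Fin m) → K) where
  toFun x := fun p => if p.1 = p.2 then ∑ l : Fin m, x (l, l) else 0
  map_add' x y := by
    funext p
    by_cases h : p.1 = p.2 <;> simp [h, Finset.sum_add_distrib]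
  map_smul' c x := by
    funext p
    by_cases h : p.1 = p.2 <;> simp [h, Finset.mul_sum]

lemma key_iff (K : Type*) [Field K] (m : ℕ)
    (a : Matrix (Fin m × Fin m) (Fin m × Fin m) K) :
    ((contractionOp K m).comp (Matrix.toLin' a)
        = (Matrix.toLin' a).comp (contractionOp K m))
      ↔ ∀ (J p : Fin m × Fin m),
        (if p.1 = p.2 then ∑ l : Fin m, a (l, l) J else 0)
          = (if J.1 = J.2 then ∑ t : Fin m, a p (t, t) else 0) := by
  constructor
  · intro h J p
    obtain ⟨l1, l2⟩ := J
    have h3 := congrFun (LinearMap.congr_fun h (Pi.single (l1, l2) 1)) p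
    simp only [LinearMap.comp_apply, Matrix.toLin'_apply, Matrix.mulVec, dotProduct,
      contractionOp, LinearMap.coe_mk, AddHom.coe_mk, Pi.single_apply, mul_ite, mul_one,
      mul_zero, Finset.sum_ite_eq', Finset.mem_univ, if_true] at h3
    rw [h3]
    by_cases hJ : l1 = l2
    · subst hJ
      simp [Prod.ext_iff, Fintype.sum_prod_type, Finset.sum_ite_eq', Finset.sum_ite_eq]
    · have hne : ∀ x : Fin m, (x, x) ≠ (l1, l2) := by
        intro x hx
        apply hJ
        rw [Prod.mk.injEq] at hx
        exact hx.1.symm.trans hx.2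
      simp [hne, hJ]
  · intro h
    apply LinearMap.ext
    intro x
    funext p
    simp only [LinearMap.comp_apply, Matrix.toLin'_apply, Matrix.mulVec, dotProduct,
      contractionOp, LinearMap.coe_mk, AddHom.coe_mk]
    have hrhs : ∑ q : Fin m × Fin m, a p q * (if q.1 = q.2 then ∑ l : Fin m, x (l, l) else 0)
        = (∑ t : Fin m, a p (t, t)) * ∑ l : Fin m, x (l, l) := by
      rw [Fintype.sum_prod_type, Finset.sum_mul]
      congr 1
      funext q1
      simp [mul_ite, Finset.sum_ite_eq']
    rw [hrhs]
    by_cases hp : p.1 = p.2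
    · rw [if_pos hp]
      have hsum : ∀ q : Fin m × Fin m, ∑ l : Fin m, a (l, l) q
          = if q.1 = q.2 then ∑ t : Fin m, a p (t, t) else 0 := by
        intro q
        have := h q p
        rwa [if_pos hp] at this
      calc ∑ l : Fin m, ∑ q : Fin m × Fin m, a (l, l) q * x q
          = ∑ q : Fin m × Fin m, (∑ l : Fin m, a (l, l) q) * x q := by
            rw [Finset.sum_comm]
            simp [Finset.sum_mul]
        _ = ∑ q : Fin m × Fin m, (if q.1 = q.2 then ∑ t : Fin m, a p (t, t) else 0) * x q := by
            simp_rw [hsum]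
        _ = (∑ t : Fin m, a p (t, t)) * ∑ l : Fin m, x (l, l) := by
            rw [Fintype.sum_prod_type, Finset.mul_sum]
            congr 1
            funext q1
            simp [ite_mul, Finset.sum_ite_eq']
    · rw [if_neg hp]
      have := h (p.1, p.1) p
      rw [if_neg hp, if_pos rfl] at this
      rw [← this, zero_mul]

/-- For `r = s = 1` and `φ = ∑ a_{IJ} E_{IJ} ∈ End_K(V ⊗ V*)` written in the matrix-unit
basis, `φ` commutes with the contraction operator `τ_r` if and only if:
(a) `∑_i a_{(ii),(l₁l₂)} = 0` for `l₁ ≠ l₂`; (b) `∑_t a_{(i₁i₂),(tt)} = 0` for `i₁ ≠ i₂`;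
(c) `∑_i a_{(ii),(ll)} = ∑_t a_{(i₁i₁),(tt)}` for all `l, i₁`. -/
theorem stmt_18 (K : Type*) [Field K] [Infinite K] (m : ℕ)
    (a : Matrix (Fin m × Fin m) (Fin m × Fin m) K) :
    ((contractionOp K m).comp (Matrix.toLin' a)
        = (Matrix.toLin' a).comp (contractionOp K m))
      ↔ ((∀ l₁ l₂ : Fin m, l₁ ≠ l₂ → ∑ i : Fin m, a (i, i) (l₁, l₂) = 0)
        ∧ (∀ i₁ i₂ : Fin m, i₁ ≠ i₂ → ∑ t : Fin m, a (i₁, i₂) (t, t) = 0)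
        ∧ (∀ l i₁ : Fin m,
            ∑ i : Fin m, a (i, i) (l, l) = ∑ t : Fin m, a (i₁, i₁) (t, t))) := by
  rw [key_iff]
  constructor
  · intro h
    refine ⟨fun l₁ l₂ hne => ?_, fun i₁ i₂ hne => ?_, fun l i₁ => ?_⟩
    · have := h (l₁, l₂) (l₁, l₁)
      rwa [if_pos rfl, if_neg hne] at this
    · have := h (i₁, i₁) (i₁, i₂)
      rw [if_neg hne, if_pos rfl] at this
      exact this.symm
    · have := h (l, l) (i₁, i₁)
      rwa [if_pos rfl, if_pos rfl] at this
  · rintro ⟨ha, hb, hc⟩ ⟨l₁, l₂⟩ ⟨p₁, p₂⟩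
    by_cases hp : p₁ = p₂ <;> by_cases hJ : l₁ = l₂
    · subst hp; subst hJ
      simp only [if_pos rfl]
      exact hc l₁ p₁
    · subst hp
      simp only [if_pos rfl, if_neg hJ]
      exact ha l₁ l₂ hJ
    · subst hJ
      simp only [if_neg hp, if_pos rfl]
      exact (hb p₁ p₂ hp).symm
    · simp [hp, hJ]
end

section
/- Let K be a field of characteristic 0 or characteristic p > max{r, s}, and V, W finite-dimensional K-vector spaces. Every φ ∈ End_K(V^{⊗r} ⊗ W^{⊗s}) that commutes with the place-permutation action of Σ_r on the first r factors and of Σ_s on the last s factors is a linear combination of maps of the form ψ_V^{⊗r} ⊗ ψ_W^{⊗s} with ψ_V ∈ End_K(V) and ψ_W ∈ End_K(W). -/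
/-!
Let `E : (⨂ End V) ⊗ (⨂ End W) → End (V^{⊗r} ⊗ W^{⊗s})` be the canonical map. For
finite-dimensional spaces it is surjective, and it intertwines reindexing of the tensor factors
on the source with conjugation by the place permutations on the target. Averaging a preimage of
`φ` over `Σ_r × Σ_s` therefore gives an element of `Sym^r (End V) ⊗ Sym^s (End W)` mapping to
`r! s! φ`. By polarization,
`∑_σ a_{σ 1} ⊗ ⋯ ⊗ a_{σ n} = ∑_S (-1)^{n - |S|} (∑_{j ∈ S} a_j)^{⊗ n}`,
so symmetric tensors are spanned by tensor powers `ψ^{⊗ n}`; and `E` sends the tensor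
`ψ_V^{⊗ r} ⊗ ψ_W^{⊗ s}` to the endomorphism `ψ_V^{⊗ r} ⊗ ψ_W^{⊗ s}`. The hypothesis on the
characteristic makes `r! s!` invertible.
-/

open TensorProduct

section Polarization

open Finset

theorem Finset.sum_supset_neg_one_pow_card_compl {ι : Type*} [Fintype ι] [DecidableEq ι]
    (T : Finset ι) :
    ∑ S : Finset ι, (if T ⊆ S then (-1 : ℤ) ^ #Sᶜ else 0) = if T = univ then 1 else 0 := by
  calc ∑ S : Finset ι, (if T ⊆ S then (-1 : ℤ) ^ #Sᶜ else 0)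
      = ∑ S : Finset ι, (if S ⊆ Tᶜ then (-1 : ℤ) ^ #S else 0) :=
        Fintype.sum_bijective compl compl_involutive.bijective _ _ fun S => by
          simp_rw [compl_subset_compl]
    _ = ∑ S ∈ Tᶜ.powerset, (-1 : ℤ) ^ #S := by
        rw [← sum_filter]; congr 1; ext; simp
    _ = if T = univ then 1 else 0 := by
        simp_rw [sum_powerset_neg_one_pow_card, compl_eq_empty_iff]

theorem Finset.sum_perm_eq_sum_filter_image_eq_univ {ι M : Type*} [Fintype ι] [DecidableEq ι]
    [AddCommMonoid M] (F : (ι → ι) → M) :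
    ∑ σ : Equiv.Perm ι, F σ = ∑ g with univ.image g = univ, F g := by
  have hperm : (univ.filter fun g : ι → ι => univ.image g = univ) =
      univ.map ⟨_, DFunLike.coe_injective (F := Equiv.Perm ι)⟩ := by
    ext g
    simp only [mem_filter, mem_univ, true_and, mem_map, Function.Embedding.coeFn_mk]
    constructor
    · intro h
      refine ⟨Equiv.ofBijective g (Finite.surjective_iff_bijective.mp fun i => ?_), rfl⟩
      have hi : i ∈ univ.image g := by rw [h]; exact mem_univ i
      simpa using hi
    · rintro ⟨σ, -, rfl⟩
      exact image_univ_of_surjective σ.surjective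
  rw [hperm, sum_map]
  rfl

theorem MultilinearMap.sum_perm_apply_comp {R ι U M : Type*} [CommSemiring R] [Fintype ι]
    [DecidableEq ι] [AddCommMonoid U] [Module R U] [AddCommGroup M] [Module R M]
    (f : MultilinearMap R (fun _ : ι => U) M) (a : ι → U) :
    ∑ σ : Equiv.Perm ι, f (a ∘ σ) =
      ∑ S : Finset ι, (-1 : ℤ) ^ #Sᶜ • f (fun _ => ∑ j ∈ S, a j) := by
  symm
  calc ∑ S : Finset ι, (-1 : ℤ) ^ #Sᶜ • f (fun _ => ∑ j ∈ S, a j)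
      = ∑ S : Finset ι, ∑ g : ι → ι,
          (if univ.image g ⊆ S then (-1 : ℤ) ^ #Sᶜ else 0) • f (a ∘ g) := by
        refine sum_congr rfl fun S _ => ?_
        have hS : Fintype.piFinset (fun _ : ι => S) = univ.filter (univ.image · ⊆ S) := by
          ext g; simp [image_subset_iff]
        simp_rw [ite_smul, zero_smul]
        rw [← sum_filter, ← hS, ← smul_sum]
        exact congrArg _ (f.map_sum_finset (fun _ j => a j) (fun _ => S))
    _ = ∑ g : ι → ι, (if univ.image g = univ then 1 else 0 : ℤ) • f (a ∘ g) := by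
        rw [sum_comm]
        simp_rw [← sum_smul, sum_supset_neg_one_pow_card_compl]
    _ = ∑ σ : Equiv.Perm ι, f (a ∘ σ) := by
        simp_rw [ite_smul, one_smul, zero_smul]
        rw [← sum_filter, sum_perm_eq_sum_filter_image_eq_univ (fun g => f (a ∘ g))]

end Polarization

namespace PiTensorProduct

section Symmetrize

variable (R ι U : Type*) [CommRing R] [Fintype ι] [DecidableEq ι] [AddCommGroup U] [Module R U]

noncomputable def symmetrize : (⨂[R] _ : ι, U) →ₗ[R] (⨂[R] _ : ι, U) :=
  ∑ σ : Equiv.Perm ι, (reindex R (fun _ => U) σ).toLinearMap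

variable {R ι U}

theorem symmetrize_tprod (a : ι → U) :
    symmetrize R ι U (tprod R a) = ∑ σ : Equiv.Perm ι, tprod R (a ∘ σ) := by
  simp only [symmetrize, LinearMap.coe_sum, Finset.sum_apply, LinearEquiv.coe_coe,
    reindex_tprod]
  exact Fintype.sum_equiv (Equiv.inv _) _ _ fun σ => rfl

theorem range_symmetrize_le_span_tprod_const :
    LinearMap.range (symmetrize R ι U) ≤
      Submodule.span R (Set.range fun u => tprod R fun _ : ι => u) := by
  rw [LinearMap.range_eq_map, ← span_tprod_eq_top, Submodule.map_span_le]
  rintro _ ⟨a, rfl⟩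
  rw [symmetrize_tprod, (tprod R).sum_perm_apply_comp a]
  exact Submodule.sum_mem _ fun S _ =>
    Submodule.smul_of_tower_mem _ _ (Submodule.subset_span ⟨_, rfl⟩)

end Symmetrize

section HomMap

variable {R ι : Type*} [CommRing R] {M N : ι → Type*}
  [∀ i, AddCommGroup (M i)] [∀ i, Module R (M i)] [∀ i, AddCommGroup (N i)] [∀ i, Module R (N i)]

instance free [Finite ι] [∀ i, Module.Free R (M i)] : Module.Free R (⨂[R] i, M i) :=
  .of_basis (Basis.piTensorProduct fun i => Module.Free.chooseBasis R (M i))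

variable [Fintype ι]

theorem dualTensorHom_dualDistrib_tprod_tmul_tprod (f : Π i, Module.Dual R (M i))
    (n : Π i, N i) :
    dualTensorHom R (⨂[R] i, M i) (⨂[R] i, N i) (dualDistrib (tprod R f) ⊗ₜ tprod R n) =
      map fun i => dualTensorHom R (M i) (N i) (f i ⊗ₜ n i) := by
  ext m
  simp only [LinearMap.compMultilinearMap_apply, dualTensorHom_apply, dualDistrib_apply,
    map_tprod]
  exact ((tprod R).map_smul_univ _ n).symm

theorem piTensorHomMap_surjective [∀ i, Module.Finite R (M i)] [∀ i, Module.Free R (M i)] :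
    Function.Surjective (piTensorHomMap : (⨂[R] i, M i →ₗ[R] N i) →ₗ[R] _) := by
  rw [← LinearMap.range_eq_top, eq_top_iff]
  rintro _ -
  obtain ⟨x, rfl⟩ := (dualTensorHom_bijective (R := R) (M := ⨂[R] i, M i)
    (N := ⨂[R] i, N i)).surjective ‹_›
  induction x using TensorProduct.induction_on with
  | zero => rw [map_zero]; exact zero_mem _
  | add x y hx hy => rw [map_add]; exact add_mem hx hy
  | tmul G n =>
    obtain ⟨g, rfl⟩ := (dualDistribEquiv (R := R) (M := M)).surjective G
    induction g using PiTensorProduct.induction_on with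
    | add g₁ g₂ h₁ h₂ => rw [map_add, add_tmul, map_add]; exact add_mem h₁ h₂
    | smul_tprod c f =>
      rw [map_smul, ← smul_tmul', map_smul]
      refine Submodule.smul_mem _ _ ?_
      induction n using PiTensorProduct.induction_on with
      | add n₁ n₂ h₁ h₂ => rw [tmul_add, map_add]; exact add_mem h₁ h₂
      | smul_tprod d n =>
        rw [tmul_smul, map_smul]
        refine Submodule.smul_mem _ _
          ⟨tprod R fun i => dualTensorHom R (M i) (N i) (f i ⊗ₜ n i), ?_⟩
        rw [piTensorHomMap_tprod_eq_map]
        exact (dualTensorHom_dualDistrib_tprod_tmul_tprod f n).symm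

end HomMap

theorem piTensorHomMap_reindex_s19 {R ι κ M : Type*} [CommRing R] [AddCommGroup M] [Module R M]
    (e : ι ≃ κ) (x : ⨂[R] _ : ι, Module.End R M) :
    piTensorHomMap (reindex R (fun _ => Module.End R M) e x) =
      (reindex R (fun _ => M) e).conj (piTensorHomMap x) := by
  induction x using PiTensorProduct.induction_on with
  | smul_tprod c f =>
    simp only [map_smul, reindex_tprod, piTensorHomMap_tprod_eq_map]
    congr 1
    ext m
    simp only [LinearMap.compMultilinearMap_apply, map_tprod, LinearEquiv.conj_apply,
      reindex_symm, LinearMap.coe_comp, LinearEquiv.coe_coe, Function.comp_apply, reindex_tprod,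
      Equiv.symm_symm]
    exact congrArg _ (funext fun i => by rw [Equiv.apply_symm_apply])
  | add x y hx hy => simp only [map_add, hx, hy]

section TensorEnd

variable (R ι κ M N : Type*) [CommRing R] [AddCommGroup M] [Module R M]
  [AddCommGroup N] [Module R N]

noncomputable def tensorPiTensorEndMap :
    (⨂[R] _ : ι, Module.End R M) ⊗[R] (⨂[R] _ : κ, Module.End R N) →ₗ[R]
      Module.End R ((⨂[R] _ : ι, M) ⊗[R] (⨂[R] _ : κ, N)) :=
  homTensorHomMap (RingHom.id R) _ _ _ _ ∘ₗ TensorProduct.map piTensorHomMap piTensorHomMap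

variable {R ι κ M N}

theorem tensorPiTensorEndMap_tmul (a : ⨂[R] _ : ι, Module.End R M)
    (b : ⨂[R] _ : κ, Module.End R N) :
    tensorPiTensorEndMap R ι κ M N (a ⊗ₜ b) =
      TensorProduct.map (piTensorHomMap a) (piTensorHomMap b) := by
  simp [tensorPiTensorEndMap]

theorem tensorPiTensorEndMap_tprod_tmul_tprod (f : ι → Module.End R M)
    (g : κ → Module.End R N) :
    tensorPiTensorEndMap R ι κ M N (tprod R f ⊗ₜ tprod R g) =
      TensorProduct.map (map f) (map g) := by
  rw [tensorPiTensorEndMap_tmul, piTensorHomMap_tprod_eq_map, piTensorHomMap_tprod_eq_map]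

theorem tensorPiTensorEndMap_surjective [Fintype ι] [Fintype κ] [Module.Finite R M]
    [Module.Free R M] [Module.Finite R N] [Module.Free R N] :
    Function.Surjective (tensorPiTensorEndMap R ι κ M N) := by
  have hHom : Function.Surjective (homTensorHomMap (RingHom.id R) (⨂[R] _ : ι, M)
      (⨂[R] _ : κ, N) (⨂[R] _ : ι, M) (⨂[R] _ : κ, N)) := by
    rw [← homTensorHomEquiv_toLinearMap]
    exact (homTensorHomEquiv ..).surjective
  exact hHom.comp
    (TensorProduct.map_surjective piTensorHomMap_surjective piTensorHomMap_surjective)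

theorem tensorPiTensorEndMap_map_reindex {ι' κ' : Type*} (e : ι ≃ ι') (e' : κ ≃ κ')
    (x : (⨂[R] _ : ι, Module.End R M) ⊗[R] (⨂[R] _ : κ, Module.End R N)) :
    tensorPiTensorEndMap R ι' κ' M N
        (TensorProduct.map (reindex R _ e).toLinearMap (reindex R _ e').toLinearMap x) =
      (TensorProduct.congr (reindex R (fun _ => M) e) (reindex R (fun _ => N) e')).conj
        (tensorPiTensorEndMap R ι κ M N x) := by
  induction x using TensorProduct.induction_on with
  | zero => simp
  | add x y hx hy => simp only [map_add, hx, hy]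
  | tmul a b =>
    simp only [TensorProduct.map_tmul, LinearEquiv.coe_coe, tensorPiTensorEndMap_tmul,
      piTensorHomMap_reindex_s19, LinearEquiv.conj_apply, TensorProduct.congr_symm,
      TensorProduct.toLinearMap_congr, ← TensorProduct.map_comp]

variable [Fintype ι] [DecidableEq ι] [Fintype κ] [DecidableEq κ]

theorem tensorPiTensorEndMap_map_symmetrize
    (x : (⨂[R] _ : ι, Module.End R M) ⊗[R] (⨂[R] _ : κ, Module.End R N)) :
    tensorPiTensorEndMap R ι κ M N
        (TensorProduct.map (symmetrize R ι (Module.End R M)) (symmetrize R κ (Module.End R N))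
          x) =
      ∑ σ : Equiv.Perm ι, ∑ τ : Equiv.Perm κ,
        (TensorProduct.congr (reindex R (fun _ => M) σ) (reindex R (fun _ => N) τ)).conj
          (tensorPiTensorEndMap R ι κ M N x) := by
  simp only [symmetrize, ← TensorProduct.mapBilinear_apply, map_sum, LinearMap.sum_apply]
  rw [Finset.sum_comm]
  simp only [TensorProduct.mapBilinear_apply, tensorPiTensorEndMap_map_reindex]

theorem tensorPiTensorEndMap_map_symmetrize_mem_span
    (x : (⨂[R] _ : ι, Module.End R M) ⊗[R] (⨂[R] _ : κ, Module.End R N)) :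
    tensorPiTensorEndMap R ι κ M N
        (TensorProduct.map (symmetrize R ι (Module.End R M)) (symmetrize R κ (Module.End R N))
          x) ∈
      Submodule.span R {f | ∃ (ψM : Module.End R M) (ψN : Module.End R N),
        f = TensorProduct.map (map fun _ : ι => ψM) (map fun _ : κ => ψN)} := by
  have hx : TensorProduct.map (symmetrize R ι (Module.End R M))
      (symmetrize R κ (Module.End R N)) x ∈
      Submodule.span R (Set.image2 (· ⊗ₜ[R] ·) (Set.range fun ψ => tprod R fun _ : ι => ψ)
        (Set.range fun ψ => tprod R fun _ : κ => ψ)) := by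
    refine (Submodule.map₂_span_span R (TensorProduct.mk R _ _) _ _).le ?_
    refine Submodule.map₂_le_map₂ range_symmetrize_le_span_tprod_const
      range_symmetrize_le_span_tprod_const ?_
    rw [← TensorProduct.range_map]
    exact ⟨x, rfl⟩
  have hEx := Submodule.mem_map_of_mem (f := tensorPiTensorEndMap R ι κ M N) hx
  rw [Submodule.map_span] at hEx
  refine Submodule.span_mono ?_ hEx
  rintro _ ⟨_, ⟨_, ⟨ψM, rfl⟩, _, ⟨ψN, rfl⟩, rfl⟩, rfl⟩
  exact ⟨ψM, ψN, tensorPiTensorEndMap_tprod_tmul_tprod _ _⟩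

end TensorEnd

end PiTensorProduct

theorem Nat.cast_factorial_ne_zero_of_charP {K : Type*} [Field K] {n : ℕ}
    (h : CharP K 0 ∨ ∃ p : ℕ, CharP K p ∧ n < p) : (n.factorial : K) ≠ 0 := by
  rcases h with h | ⟨p, hp, hn⟩
  · have := CharP.charP_to_charZero K
    exact Nat.cast_ne_zero.mpr n.factorial_ne_zero
  · rcases CharP.char_is_prime_or_zero K p with hprime | rfl
    · have := Fact.mk hprime
      exact ((IsUnit.natCast_factorial_iff_of_charP p).mpr hn).ne_zero
    · exact absurd hn (Nat.not_lt_zero n)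

theorem TensorProduct.conj_congr_eq_self {R M N : Type*} [CommRing R] [AddCommGroup M]
    [Module R M] [AddCommGroup N] [Module R N] (e : M ≃ₗ[R] M) (e' : N ≃ₗ[R] N)
    {φ : Module.End R (M ⊗[R] N)}
    (he : φ ∘ₗ e.toLinearMap.rTensor N = e.toLinearMap.rTensor N ∘ₗ φ)
    (he' : φ ∘ₗ e'.toLinearMap.lTensor M = e'.toLinearMap.lTensor M ∘ₗ φ) :
    (TensorProduct.congr e e').conj φ = φ := by
  have hcomm : φ ∘ₗ TensorProduct.congr e e' = TensorProduct.congr e e' ∘ₗ φ := by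
    rw [TensorProduct.toLinearMap_congr, ← LinearMap.rTensor_comp_lTensor,
      ← LinearMap.comp_assoc, he, LinearMap.comp_assoc, he', LinearMap.comp_assoc]
  refine LinearMap.ext fun z => ?_
  have hz := LinearMap.congr_fun hcomm ((TensorProduct.congr e e').symm z)
  simp only [LinearMap.comp_apply, LinearEquiv.coe_coe, LinearEquiv.apply_symm_apply] at hz
  simp only [LinearEquiv.conj_apply, LinearMap.comp_apply, LinearEquiv.coe_coe, ← hz]

/-- Let `K` have characteristic `0` or `p > max r s`, and let `V, W` be finite-dimensional
`K`-vector spaces.  Every endomorphism `φ` of `V^{⊗r} ⊗ W^{⊗s}` commuting with the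
place-permutation actions of `Σ_r` on the first `r` factors and of `Σ_s` on the last `s`
factors is a linear combination of maps `ψ_V^{⊗r} ⊗ ψ_W^{⊗s}` with `ψ_V ∈ End_K V`,
`ψ_W ∈ End_K W`. -/
theorem stmt_19 (K : Type*) [Field K] (r s : ℕ)
    (hchar : CharP K 0 ∨ ∃ p : ℕ, CharP K p ∧ max r s < p)
    (V W : Type*) [AddCommGroup V] [Module K V] [FiniteDimensional K V]
    [AddCommGroup W] [Module K W] [FiniteDimensional K W]
    (φ : Module.End K
      ((PiTensorProduct K (fun _ : Fin r => V)) ⊗[K] (PiTensorProduct K (fun _ : Fin s => W))))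
    (hσ : ∀ σ : Equiv.Perm (Fin r),
      φ ∘ₗ LinearMap.rTensor (PiTensorProduct K (fun _ : Fin s => W))
          (PiTensorProduct.reindex K (fun _ : Fin r => V) σ).toLinearMap
        = LinearMap.rTensor (PiTensorProduct K (fun _ : Fin s => W))
            (PiTensorProduct.reindex K (fun _ : Fin r => V) σ).toLinearMap ∘ₗ φ)
    (hτ : ∀ τ : Equiv.Perm (Fin s),
      φ ∘ₗ LinearMap.lTensor (PiTensorProduct K (fun _ : Fin r => V))
          (PiTensorProduct.reindex K (fun _ : Fin s => W) τ).toLinearMap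
        = LinearMap.lTensor (PiTensorProduct K (fun _ : Fin r => V))
            (PiTensorProduct.reindex K (fun _ : Fin s => W) τ).toLinearMap ∘ₗ φ) :
    φ ∈ Submodule.span K
      {f | ∃ (ψV : Module.End K V) (ψW : Module.End K W),
        f = TensorProduct.map
              (PiTensorProduct.map (fun _ : Fin r => ψV))
              (PiTensorProduct.map (fun _ : Fin s => ψW))} := by
  obtain ⟨x, rfl⟩ :=
    PiTensorProduct.tensorPiTensorEndMap_surjective (R := K) (ι := Fin r) (κ := Fin s) φ
  have hfac : ((r.factorial * s.factorial : ℕ) : K) ≠ 0 := by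
    rw [Nat.cast_mul]
    refine mul_ne_zero (Nat.cast_factorial_ne_zero_of_charP ?_)
      (Nat.cast_factorial_ne_zero_of_charP ?_)
    · exact hchar.imp_right fun ⟨p, hp, h⟩ => ⟨p, hp, (le_max_left r s).trans_lt h⟩
    · exact hchar.imp_right fun ⟨p, hp, h⟩ => ⟨p, hp, (le_max_right r s).trans_lt h⟩
  have havg := PiTensorProduct.tensorPiTensorEndMap_map_symmetrize x
  simp only [TensorProduct.conj_congr_eq_self _ _ (hσ _) (hτ _), Finset.sum_const,
    Finset.card_univ, Fintype.card_perm, Fintype.card_fin, smul_smul] at havg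
  rw [← inv_smul_smul₀ hfac (PiTensorProduct.tensorPiTensorEndMap K _ _ V W x),
    Nat.cast_smul_eq_nsmul, ← havg]
  exact Submodule.smul_mem _ _ (PiTensorProduct.tensorPiTensorEndMap_map_symmetrize_mem_span x)
end
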